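/- arXiv:1701.03432 — 6 statements merged into one kernel-verified Lean document; each statement's English description precedes it below -/
import Mathlib

section
/- Let Φ : ℝ₊ → ℝ₊ be a bounded continuous function with Φ(1) = 1, and let (γ_n) be a sequence of positive reals with γ_n → ∞. For γ > 0 let P_γ be Poisson of parameter γ with E[Φ(P_γ/γ)] > 0, and let 𝒬_γ(Φ) be the ℕ-valued random variable with P(𝒬_γ(Φ) = k) = Φ(k/γ) P(P_γ = k) / E[Φ(P_γ/γ)]. Then for every x ≥ 0, E[x^{𝒬_{γ_n}(Φ)}] / e^{γ_n(x−1)} → Φ(x) as n → ∞. -/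
/-!
Exponential tilting turns `P(P_γ = k) x^k` into `e^{γ(x-1)} P(P_{γx} = k)`, so the ratio in
question is `E[Φ(P_{γx}/γ)] / E[Φ(P_γ/γ)]`. The variable `P_{γx}/γ` has mean `x` and variance
`x/γ → 0`, and a bounded function continuous at `x` satisfies `|Φ y - Φ x| ≤ ε + c (y - x)^2`,
so `E[Φ(P_{γx}/γ)] → Φ(x)`; at `x = 1` the denominator tends to `Φ(1) = 1`.
-/

open Filter

/-- The probability mass function of the Poisson distribution of parameter `γ`:
`P(P_γ = k) = e^{-γ} γ^k / k!`. -/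
noncomputable def poissonPMFreal (γ : ℝ) (k : ℕ) : ℝ :=
  Real.exp (-γ) * γ ^ k / (Nat.factorial k)

open Topology Set

theorem hasSum_poissonPMFreal (l : ℝ) : HasSum (poissonPMFreal l) 1 := by
  have h := (NormedSpace.expSeries_div_hasSum_exp l).mul_left (Real.exp (-l))
  rw [← Real.exp_eq_exp_ℝ, ← Real.exp_add, neg_add_cancel, Real.exp_zero] at h
  have hpmf : poissonPMFreal l = fun k => Real.exp (-l) * (l ^ k / k.factorial) :=
    funext fun k => mul_div_assoc _ _ _
  rwa [hpmf]

theorem poissonPMFreal_nonneg {l : ℝ} (hl : 0 ≤ l) (k : ℕ) : 0 ≤ poissonPMFreal l k := by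
  unfold poissonPMFreal
  positivity

theorem poissonPMFreal_succ_mul (l : ℝ) (k : ℕ) :
    poissonPMFreal l (k + 1) * (k + 1) = l * poissonPMFreal l k := by
  simp only [poissonPMFreal, Nat.factorial_succ, Nat.cast_mul, Nat.cast_succ]
  field_simp
  ring

theorem hasSum_descFactorial_mul_poissonPMFreal (l : ℝ) (j : ℕ) :
    HasSum (fun k : ℕ => (k.descFactorial j : ℝ) * poissonPMFreal l k) (l ^ j) := by
  induction j with
  | zero => simpa using hasSum_poissonPMFreal l
  | succ j ih =>
    have hshift (k : ℕ) : ((k + 1).descFactorial (j + 1) : ℝ) * poissonPMFreal l (k + 1) =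
        l * ((k.descFactorial j : ℝ) * poissonPMFreal l k) := by
      rw [Nat.succ_descFactorial_succ]
      push_cast
      linear_combination (k.descFactorial j : ℝ) * poissonPMFreal_succ_mul l k
    rw [← hasSum_nat_add_iff' 1, pow_succ']
    simp only [hshift, Finset.sum_range_one, Nat.zero_descFactorial_succ, Nat.cast_zero, zero_mul,
      sub_zero]
    exact ih.mul_left l

theorem hasSum_poissonPMFreal_mul_sub_sq (l : ℝ) :
    HasSum (fun k : ℕ => poissonPMFreal l k * (k - l) ^ 2) l := by
  have h0 := hasSum_descFactorial_mul_poissonPMFreal l 0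
  have h1 := hasSum_descFactorial_mul_poissonPMFreal l 1
  have h2 := hasSum_descFactorial_mul_poissonPMFreal l 2
  simp only [Nat.descFactorial_zero, Nat.descFactorial_one, Nat.cast_descFactorial_two,
    Nat.cast_one, one_mul] at h0 h1 h2
  convert (h2.add (h1.mul_left (1 - 2 * l))).add (h0.mul_left (l ^ 2)) using 1
  · ext k
    ring
  · ring

theorem poissonPMFreal_mul_pow (γ x : ℝ) (k : ℕ) :
    poissonPMFreal γ k * x ^ k = Real.exp (γ * (x - 1)) * poissonPMFreal (γ * x) k := by
  simp only [poissonPMFreal, mul_pow]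
  rw [show -(γ * x) = -γ - γ * (x - 1) by ring, Real.exp_sub]
  field_simp

theorem ContinuousWithinAt.exists_abs_sub_le_add_mul_sq {f : ℝ → ℝ} {s : Set ℝ} {x M ε : ℝ}
    (hf : ContinuousWithinAt f s x) (hx : x ∈ s) (hM : ∀ y ∈ s, |f y| ≤ M) (hε : 0 < ε) :
    ∃ c, ∀ y ∈ s, |f y - f x| ≤ ε + c * (y - x) ^ 2 := by
  obtain ⟨δ, hδ, hnear⟩ := Metric.continuousWithinAt_iff.mp hf ε hε
  -- Away from `x` the oscillation `2 M` is absorbed by `c (y - x)^2`, since there `(y - x)^2 ≥ δ^2`.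
  refine ⟨2 * M / δ ^ 2, fun y hy => ?_⟩
  have hM0 : 0 ≤ M := (abs_nonneg _).trans (hM x hx)
  rcases lt_or_ge (dist y x) δ with hyx | hyx
  · have := hnear hy hyx
    rw [Real.dist_eq] at this
    nlinarith [sq_nonneg (y - x), div_nonneg (mul_nonneg zero_le_two hM0) (sq_nonneg δ)]
  · have hfar : 2 * M ≤ 2 * M / δ ^ 2 * (y - x) ^ 2 := by
      have hsq : δ ^ 2 ≤ (y - x) ^ 2 := by
        rw [← sq_abs (y - x), ← Real.dist_eq]
        exact pow_le_pow_left₀ hδ.le hyx 2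
      rw [div_mul_eq_mul_div, le_div_iff₀ (by positivity)]
      exact mul_le_mul_of_nonneg_left hsq (by positivity)
    have := abs_sub (f y) (f x)
    linarith [hM y hy, hM x hx]

theorem abs_tsum_mul_sub_le {ι : Type*} {w t : ι → ℝ} {f : ℝ → ℝ} {x v ε c : ℝ}
    (hw0 : ∀ i, 0 ≤ w i) (hw : HasSum w 1) (hv : HasSum (fun i => w i * (t i - x) ^ 2) v)
    (hf : ∀ i, |f (t i) - f x| ≤ ε + c * (t i - x) ^ 2) :
    |∑' i, w i * f (t i) - f x| ≤ ε + c * v := by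
  have hbound : HasSum (fun i => ε * w i + c * (w i * (t i - x) ^ 2)) (ε + c * v) := by
    simpa using (hw.mul_left ε).add (hv.mul_left c)
  have hle : ∀ i, ‖w i * (f (t i) - f x)‖ ≤ ε * w i + c * (w i * (t i - x) ^ 2) := fun i => by
    rw [Real.norm_eq_abs, abs_mul, abs_of_nonneg (hw0 i)]
    nlinarith [mul_le_mul_of_nonneg_left (hf i) (hw0 i)]
  have hsum : ∑' i, w i * f (t i) - f x = ∑' i, w i * (f (t i) - f x) := by
    have h := (hbound.summable.of_norm_bounded hle).hasSum.add (hw.mul_right (f x))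
    simp only [one_mul, ← mul_add, sub_add_cancel] at h
    rw [h.tsum_eq, add_sub_cancel_right]
  rw [hsum]
  exact tsum_of_norm_bounded hbound hle

theorem tendsto_tsum_poissonPMFreal_mul_div {Φ : ℝ → ℝ} {x M : ℝ} (hx : 0 ≤ x)
    (hΦ : ContinuousWithinAt Φ (Ici 0) x) (hM : ∀ y, 0 ≤ y → |Φ y| ≤ M) :
    Tendsto (fun γ : ℝ => ∑' k : ℕ, poissonPMFreal (γ * x) k * Φ (k / γ)) atTop (𝓝 (Φ x)) := by
  refine Metric.tendsto_nhds.mpr fun ε hε => ?_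
  obtain ⟨c, hc⟩ := hΦ.exists_abs_sub_le_add_mul_sq hx hM (half_pos hε)
  have hvar : Tendsto (fun γ : ℝ => c * (x / γ)) atTop (𝓝 0) := by
    simpa using (tendsto_const_nhds.div_atTop tendsto_id).const_mul c
  filter_upwards [eventually_gt_atTop 0, hvar.eventually (gt_mem_nhds (half_pos hε))]
    with γ hγ hsmall
  have hv : HasSum (fun k : ℕ => poissonPMFreal (γ * x) k * (k / γ - x) ^ 2) (x / γ) := by
    have h := (hasSum_poissonPMFreal_mul_sub_sq (γ * x)).div_const (γ ^ 2)
    rw [sq γ, mul_div_mul_left _ _ hγ.ne'] at h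
    have hscale : (fun k : ℕ => poissonPMFreal (γ * x) k * (k / γ - x) ^ 2) =
        fun k => poissonPMFreal (γ * x) k * (k - γ * x) ^ 2 / (γ * γ) :=
      funext fun k => by field_simp
    rwa [hscale]
  rw [Real.dist_eq]
  calc |∑' k : ℕ, poissonPMFreal (γ * x) k * Φ (k / γ) - Φ x| ≤ ε / 2 + c * (x / γ) :=
        abs_tsum_mul_sub_le (poissonPMFreal_nonneg (by positivity)) (hasSum_poissonPMFreal _) hv
          fun k => hc _ (mem_Ici.mpr (by positivity))
    _ < ε := by linarith

theorem penalised_poisson_mod_poisson_general (Φ : ℝ → ℝ)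
    (hΦcont : ContinuousOn Φ (Set.Ici 0))
    (hΦbdd : ∃ M : ℝ, ∀ x : ℝ, 0 ≤ x → |Φ x| ≤ M)
    (hΦone : Φ 1 = 1)
    (γ : ℕ → ℝ) (hγtop : Tendsto γ atTop atTop) :
    ∀ x : ℝ, 0 ≤ x →
      Tendsto (fun n =>
          (∑' k : ℕ, poissonPMFreal (γ n) k * Φ (k / γ n) * x ^ k) /
            ((∑' k : ℕ, poissonPMFreal (γ n) k * Φ (k / γ n)) * Real.exp (γ n * (x - 1))))
        atTop (nhds (Φ x)) := by
  intro x hx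
  obtain ⟨M, hM⟩ := hΦbdd
  have hlim (y : ℝ) (hy : 0 ≤ y) := tendsto_tsum_poissonPMFreal_mul_div hy (hΦcont y hy) hM
  have hratio := (hlim x hx).div (hlim 1 zero_le_one) (by simp [hΦone])
  rw [hΦone, div_one] at hratio
  refine (hratio.comp hγtop).congr fun n => ?_
  simp only [Function.comp_apply, Pi.div_apply, mul_one, mul_right_comm _ (Φ _) (x ^ _),
    poissonPMFreal_mul_pow, mul_assoc, tsum_mul_left]
  rw [mul_comm (Real.exp _), mul_div_mul_right _ _ (Real.exp_pos _).ne']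

/-- Let `Φ : ℝ₊ → ℝ₊` be bounded and continuous with `Φ(1) = 1`, and let `γ_n → ∞` be positive.
Let `𝒬_{γ_n}(Φ)` be the penalisation of a Poisson random variable `P_{γ_n}` by the weight
`Φ(P_{γ_n}/γ_n)`, i.e. `P(𝒬_γ(Φ) = k) = Φ(k/γ) P(P_γ = k) / E[Φ(P_γ/γ)]`.  Then for all `x ≥ 0`,
`E[x^{𝒬_{γ_n}(Φ)}] / e^{γ_n (x-1)} → Φ(x)` (mod-Poisson convergence to `Φ`).  Here
`E[x^{𝒬_γ(Φ)}] = (∑_k Φ(k/γ) P(P_γ = k) x^k) / E[Φ(P_γ/γ)]` and `E[x^{P_γ}] = e^{γ(x-1)}`. -/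
theorem penalised_poisson_mod_poisson (Φ : ℝ → ℝ)
    (hΦcont : ContinuousOn Φ (Set.Ici 0))
    (hΦbdd : ∃ M : ℝ, ∀ x : ℝ, 0 ≤ x → |Φ x| ≤ M)
    (hΦnonneg : ∀ x : ℝ, 0 ≤ x → 0 ≤ Φ x)
    (hΦone : Φ 1 = 1)
    (γ : ℕ → ℝ) (hγpos : ∀ n, 0 < γ n) (hγtop : Tendsto γ atTop atTop)
    (hdenpos : ∀ n, 0 < ∑' k : ℕ, poissonPMFreal (γ n) k * Φ (k / γ n)) :
    ∀ x : ℝ, 0 ≤ x →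
      Tendsto (fun n =>
          (∑' k : ℕ, poissonPMFreal (γ n) k * Φ (k / γ n) * x ^ k) /
            ((∑' k : ℕ, poissonPMFreal (γ n) k * Φ (k / γ n)) * Real.exp (γ n * (x - 1))))
        atTop (nhds (Φ x)) :=
  penalised_poisson_mod_poisson_general Φ hΦcont hΦbdd hΦone γ hγtop
end

section
/- Let (p_k)_{k ≥ 1} be a sequence in [0,1] with Σ_{k≥1} p_k = +∞ and Σ_{k≥1} p_k² < +∞, and let (B_k)_{k≥1} be independent Bernoulli random variables with P(B_k = 1) = p_k = 1 − P(B_k = 0). Set Z_n := Σ_{k=1}^n B_k and γ_n := Σ_{k=1}^n p_k. Then for every x ≥ 0, the infinite product Φ(x) := ∏_{k≥1} (1 + p_k(x−1)) e^{−p_k(x−1)} converges, and E[x^{Z_n}] / e^{γ_n(x−1)} → Φ(x) as n → ∞. -/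
/-!
By independence, `E[x^{Z_n}] = ∏_{k<n} E[x^{B_k}] = ∏_{k<n} (1 + p_k(x-1))`, and
`e^{γ_n(x-1)} = ∏_{k<n} e^{p_k(x-1)}`, so the ratio is the `n`-th partial product of
`Φ(x)`. That product converges because `log ((1 + a) e^{-a}) = log (1 + a) - a = O(a²)` and
`∑ p_k² (x-1)² < ∞`.
-/

open MeasureTheory ProbabilityTheory Filter

namespace Real

theorem abs_log_one_add_sub_self_le {t : ℝ} (ht : |t| ≤ 1 / 2) :
    |log (1 + t) - t| ≤ 2 * t ^ 2 := by
  have h := abs_log_sub_add_sum_range_le (x := -t) (by rw [abs_neg]; linarith) 1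
  rw [Finset.sum_range_one, abs_neg, sub_neg_eq_add] at h
  calc |log (1 + t) - t| ≤ |t| ^ 2 / (1 - |t|) := by convert h using 2; ring
    _ ≤ 2 * t ^ 2 := by
      rw [div_le_iff₀ (by linarith), sq_abs]
      nlinarith [sq_nonneg t]

theorem multipliable_one_add_mul_exp_neg {ι : Type*} {a : ι → ℝ}
    (ha : Summable fun i => a i ^ 2) : Multipliable fun i => (1 + a i) * exp (-a i) := by
  have hsmall : ∀ᶠ i in cofinite, |a i| ≤ 1 / 2 := by
    filter_upwards [ha.tendsto_cofinite_zero.eventually_le_const (by norm_num : (0 : ℝ) < 1 / 4)]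
      with i hi
    exact abs_le_of_sq_le_sq (by linarith) (by norm_num)
  refine multipliable_of_summable_log' ?_ ((ha.mul_left 2).of_norm_bounded_eventually ?_)
  · filter_upwards [hsmall] with i hi
    exact mul_pos (by linarith [neg_abs_le (a i)]) (exp_pos _)
  · filter_upwards [hsmall] with i hi
    rw [log_mul (by linarith [neg_abs_le (a i)]) (exp_ne_zero _), log_exp, ← sub_eq_add_neg,
      norm_eq_abs]
    exact abs_log_one_add_sub_self_le hi

end Real

theorem integral_pow_of_le_one {Ω : Type*} [MeasurableSpace Ω] {μ : Measure Ω}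
    [IsProbabilityMeasure μ] {B : Ω → ℕ} (hB : Measurable B) (hB1 : ∀ ω, B ω ≤ 1) (x : ℝ) :
    ∫ ω, x ^ B ω ∂μ = 1 + μ.real {ω | B ω = 1} * (x - 1) := by
  have hset : MeasurableSet {ω | B ω = 1} := hB (measurableSet_singleton 1)
  have hpow : (fun ω => x ^ B ω) = fun ω => 1 + {ω | B ω = 1}.indicator (fun _ => x - 1) ω := by
    funext ω
    rcases Nat.le_one_iff_eq_zero_or_eq_one.mp (hB1 ω) with h | h <;> simp [h]
  rw [hpow, integral_add (integrable_const 1) ((integrable_const _).indicator hset),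
    integral_indicator_const _ hset]
  simp

theorem ProbabilityTheory.iIndepFun.integral_pow_sum {Ω 𝕜 ι : Type*} [MeasurableSpace Ω]
    {μ : Measure Ω} [RCLike 𝕜] {B : ι → Ω → ℕ} (hB : ∀ i, Measurable (B i))
    (hindep : iIndepFun B μ) (x : 𝕜) (s : Finset ι) :
    ∫ ω, x ^ (∑ i ∈ s, B i ω) ∂μ = ∏ i ∈ s, ∫ ω, x ^ B i ω ∂μ := by
  simp_rw [← Finset.prod_pow_eq_pow_sum, ← Finset.prod_coe_sort s]
  exact (hindep.precomp Subtype.val_injective).integral_fun_prod_comp (f := fun _ n => x ^ n)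
    (fun i => (hB i).aemeasurable) fun _ => measurable_from_top.aestronglyMeasurable

theorem mod_poisson_bernoulli_sum_general
    {Ω : Type*} [MeasureSpace Ω] [IsProbabilityMeasure (ℙ : Measure Ω)]
    (p : ℕ → ℝ) (hp : ∀ k, p k ∈ Set.Icc (0 : ℝ) 1)
    (hsq : Summable fun k => (p k) ^ 2)
    (B : ℕ → Ω → ℕ) (hmeas : ∀ k, Measurable (B k))
    (hval : ∀ k ω, B k ω ≤ 1)
    (hdist : ∀ k, ℙ {ω | B k ω = 1} = ENNReal.ofReal (p k))
    (hindep : iIndepFun B ℙ) :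
    ∀ x : ℝ, 0 ≤ x →
      Multipliable (fun k => (1 + p k * (x - 1)) * Real.exp (-(p k * (x - 1)))) ∧
      Tendsto (fun n =>
          (∫ ω, x ^ (∑ k ∈ Finset.range n, B k ω) ∂ℙ) /
            Real.exp ((∑ k ∈ Finset.range n, p k) * (x - 1)))
        atTop (nhds (∏' k : ℕ, (1 + p k * (x - 1)) * Real.exp (-(p k * (x - 1))))) := by
  intro x _
  have hmult : Multipliable fun k => (1 + p k * (x - 1)) * Real.exp (-(p k * (x - 1))) :=
    Real.multipliable_one_add_mul_exp_neg (by simpa [mul_pow] using hsq.mul_right ((x - 1) ^ 2))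
  have hratio : ∀ n, (∫ ω, x ^ (∑ k ∈ Finset.range n, B k ω) ∂ℙ) /
      Real.exp ((∑ k ∈ Finset.range n, p k) * (x - 1)) =
        ∏ k ∈ Finset.range n, (1 + p k * (x - 1)) * Real.exp (-(p k * (x - 1))) := by
    intro n
    rw [hindep.integral_pow_sum hmeas, Finset.sum_mul, Real.exp_sum, ← Finset.prod_div_distrib]
    refine Finset.prod_congr rfl fun k _ => ?_
    rw [integral_pow_of_le_one (hmeas k) (hval k), measureReal_def, hdist,
      ENNReal.toReal_ofReal (hp k).1, Real.exp_neg, div_eq_mul_inv]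
  exact ⟨hmult, hmult.hasProd.tendsto_prod_nat.congr fun n => (hratio n).symm⟩

/-- Let `(p_k)` be a sequence in `[0,1]` with `∑ p_k = ∞` and `∑ p_k² < ∞`, and `(B_k)`
independent Bernoulli random variables with `P(B_k = 1) = p_k`.  Set `Z_n := ∑_{k<n} B_k` and
`γ_n := ∑_{k<n} p_k`.  For every `x ≥ 0` the infinite product
`Φ(x) = ∏_k (1 + p_k(x-1)) e^{-p_k(x-1)}` converges and
`E[x^{Z_n}] / e^{γ_n(x-1)} → Φ(x)` (mod-Poisson convergence at speed `γ_n`). -/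
theorem mod_poisson_bernoulli_sum
    {Ω : Type*} [MeasureSpace Ω] [IsProbabilityMeasure (ℙ : Measure Ω)]
    (p : ℕ → ℝ) (hp : ∀ k, p k ∈ Set.Icc (0 : ℝ) 1)
    (hdiv : Tendsto (fun n => ∑ k ∈ Finset.range n, p k) atTop atTop)
    (hsq : Summable fun k => (p k) ^ 2)
    (B : ℕ → Ω → ℕ) (hmeas : ∀ k, Measurable (B k))
    (hval : ∀ k ω, B k ω ≤ 1)
    (hdist : ∀ k, ℙ {ω | B k ω = 1} = ENNReal.ofReal (p k))
    (hindep : iIndepFun B ℙ) :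
    ∀ x : ℝ, 0 ≤ x →
      Multipliable (fun k => (1 + p k * (x - 1)) * Real.exp (-(p k * (x - 1)))) ∧
      Tendsto (fun n =>
          (∫ ω, x ^ (∑ k ∈ Finset.range n, B k ω) ∂ℙ) /
            Real.exp ((∑ k ∈ Finset.range n, p k) * (x - 1)))
        atTop (nhds (∏' k : ℕ, (1 + p k * (x - 1)) * Real.exp (-(p k * (x - 1))))) :=
  mod_poisson_bernoulli_sum_general p hp hsq B hmeas hval hdist hindep
end

section
/- For k ≥ 1 define φ_k(x) := ∏_{ℓ=1}^k (1 + (x−1)/ℓ) e^{−(x−1)/ℓ} for x ≥ 0. Then for every k ≥ 1 and every x ≥ 0, |φ_k'(x)| ≤ e; in particular sup_{x ∈ ℝ₊} |φ_k'(x)| = O(1) as k → ∞. -/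
/-!
Write `φ_k = ∏_{ℓ=1}^k f_ℓ` with `f_ℓ(x) = (1 + (x-1)/ℓ) e^{-(x-1)/ℓ} ∈ [0, 1]` for `x ≥ 0` and
`f_ℓ'(x) = -((x-1)/ℓ²) e^{-(x-1)/ℓ}`. In the product rule every term except the first still contains
the factor `f_1(x) = x e^{1-x}`, so `|φ_k'| ≤ |f_1'| + f_1 ∑_{j ≥ 2} |f_j'|`. Since
`∑_{j ≥ 2} 1/j² ≤ 1` and `e^{-(x-1)/j}` is at most `1` for `x ≥ 1` and at most `e^{(1-x)/2}` for
`x ≤ 1`, what remains is an inequality in one real variable; it is tight at `x = 0`.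
-/

/-- The `k`-th partial product `φ_k(x) = ∏_{ℓ=1}^k (1 + (x-1)/ℓ) e^{-(x-1)/ℓ}` of `Φ_C`. -/
noncomputable def phiCpartial (k : ℕ) (x : ℝ) : ℝ :=
  ∏ ℓ ∈ Finset.Icc 1 k, (1 + (x - 1) / ℓ) * Real.exp (-((x - 1) / ℓ))

open Finset Real

namespace Finset

variable {ι R : Type*} [DecidableEq ι] {s : Finset ι} {f : ι → R} {i : ι}

lemma prod_le_of_mem_of_le_one [CommMonoidWithZero R] [Preorder R] [ZeroLEOneClass R]
    [PosMulMono R] (h0 : ∀ j ∈ s, 0 ≤ f j) (h1 : ∀ j ∈ s, f j ≤ 1) (hi : i ∈ s) :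
    ∏ j ∈ s, f j ≤ f i :=
  calc ∏ j ∈ s, f j = f i * ∏ j ∈ s.erase i, f j := (mul_prod_erase s f hi).symm
    _ ≤ f i * 1 := mul_le_mul_of_nonneg_left
        (prod_le_one (fun j hj ↦ h0 j (mem_of_mem_erase hj)) fun j hj ↦ h1 j (mem_of_mem_erase hj))
        (h0 i hi)
    _ = f i := mul_one _

lemma abs_sum_prod_erase_mul_le [CommRing R] [LinearOrder R] [IsStrictOrderedRing R]
    (h0 : ∀ j ∈ s, 0 ≤ f j) (h1 : ∀ j ∈ s, f j ≤ 1) (hi : i ∈ s) (d : ι → R) :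
    |∑ j ∈ s, (∏ ℓ ∈ s.erase j, f ℓ) * d j| ≤ |d i| + f i * ∑ j ∈ s.erase i, |d j| := by
  have h0' : ∀ j, ∀ ℓ ∈ s.erase j, 0 ≤ f ℓ := fun j ℓ hℓ ↦ h0 ℓ (mem_of_mem_erase hℓ)
  have h1' : ∀ j, ∀ ℓ ∈ s.erase j, f ℓ ≤ 1 := fun j ℓ hℓ ↦ h1 ℓ (mem_of_mem_erase hℓ)
  have habs : ∀ j, |(∏ ℓ ∈ s.erase j, f ℓ) * d j| = (∏ ℓ ∈ s.erase j, f ℓ) * |d j| := fun j ↦ by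
    rw [abs_mul, abs_of_nonneg (prod_nonneg (h0' j))]
  rw [← add_sum_erase s _ hi, mul_sum]
  refine (abs_add_le _ _).trans (add_le_add ?_ ((abs_sum_le_sum_abs _ _).trans ?_))
  · rw [habs]
    exact mul_le_of_le_one_left (abs_nonneg _) (prod_le_one (h0' i) (h1' i))
  · refine sum_le_sum fun j hj ↦ ?_
    rw [habs]
    exact mul_le_mul_of_nonneg_right
      (prod_le_of_mem_of_le_one (h0' j) (h1' j) (mem_erase.2 ⟨(ne_of_mem_erase hj).symm, hi⟩))
      (abs_nonneg _)

end Finset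

lemma one_add_mul_exp_neg_le_one (t : ℝ) : (1 + t) * exp (-t) ≤ 1 :=
  calc (1 + t) * exp (-t) ≤ exp t * exp (-t) :=
        mul_le_mul_of_nonneg_right (by linarith [add_one_le_exp t]) (exp_pos _).le
    _ = 1 := by rw [← exp_add, add_neg_cancel, exp_zero]

noncomputable def phiCfactor (ℓ : ℕ) (x : ℝ) : ℝ :=
  (1 + (x - 1) / ℓ) * exp (-((x - 1) / ℓ))

lemma phiCpartial_eq_prod (k : ℕ) : phiCpartial k = ∏ ℓ ∈ Icc 1 k, phiCfactor ℓ := by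
  ext x
  simp [phiCpartial, phiCfactor, Finset.prod_apply]

lemma phiCfactor_nonneg {ℓ : ℕ} (hℓ : 1 ≤ ℓ) {x : ℝ} (hx : 0 ≤ x) : 0 ≤ phiCfactor ℓ x := by
  have hℓ' : (1 : ℝ) ≤ ℓ := by exact_mod_cast hℓ
  have : -1 ≤ (x - 1) / ℓ := by
    rw [le_div_iff₀ (by positivity)]
    linarith
  exact mul_nonneg (by linarith) (exp_pos _).le

lemma phiCfactor_le_one (ℓ : ℕ) (x : ℝ) : phiCfactor ℓ x ≤ 1 :=
  one_add_mul_exp_neg_le_one _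

lemma phiCfactor_one (x : ℝ) : phiCfactor 1 x = x * exp (-(x - 1)) := by
  simp [phiCfactor]

lemma hasDerivAt_phiCfactor (ℓ : ℕ) (x : ℝ) :
    HasDerivAt (phiCfactor ℓ) (-((x - 1) / ℓ ^ 2) * exp (-((x - 1) / ℓ))) x := by
  have h : HasDerivAt (fun x : ℝ ↦ (x - 1) / ℓ) (1 / ℓ) x := by
    simpa using ((hasDerivAt_id x).sub_const 1).div_const (ℓ : ℝ)
  exact ((h.const_add 1).fun_mul h.fun_neg.exp).congr_deriv (by ring)

lemma hasDerivAt_phiCpartial (k : ℕ) (x : ℝ) :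
    HasDerivAt (phiCpartial k)
      (∑ j ∈ Icc 1 k, (∏ ℓ ∈ (Icc 1 k).erase j, phiCfactor ℓ x) *
        (-((x - 1) / j ^ 2) * exp (-((x - 1) / j)))) x := by
  rw [phiCpartial_eq_prod]
  simpa using HasDerivAt.finsetProd fun j _ ↦ hasDerivAt_phiCfactor j x

lemma sum_Icc_erase_one_inv_sq_le_one (k : ℕ) : ∑ j ∈ (Icc 1 k).erase 1, ((j : ℝ) ^ 2)⁻¹ ≤ 1 :=
  calc ∑ j ∈ (Icc 1 k).erase 1, ((j : ℝ) ^ 2)⁻¹ ≤ ∑ j ∈ Ioo 1 (k + 1), ((j : ℝ) ^ 2)⁻¹ :=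
        sum_le_sum_of_subset_of_nonneg
          (fun j hj ↦ by simp only [mem_erase, mem_Icc, mem_Ioo] at hj ⊢; omega)
          fun _ _ _ ↦ by positivity
    _ ≤ 2 / ((1 : ℕ) + 1) := sum_Ioo_inv_sq_le 1 (k + 1)
    _ = 1 := by norm_num

lemma abs_deriv_phiCpartial_le {k : ℕ} (hk : 1 ≤ k) {x M : ℝ} (hx : 0 ≤ x) (hM : 0 ≤ M)
    (hexp : ∀ j ∈ (Icc 1 k).erase 1, exp (-((x - 1) / j)) ≤ M) :
    |deriv (phiCpartial k) x| ≤ |x - 1| * exp (-(x - 1)) + x * exp (-(x - 1)) * (|x - 1| * M) := by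
  rw [(hasDerivAt_phiCpartial k x).deriv]
  refine (abs_sum_prod_erase_mul_le (fun ℓ hℓ ↦ phiCfactor_nonneg (mem_Icc.1 hℓ).1 hx)
    (fun ℓ _ ↦ phiCfactor_le_one ℓ x) (left_mem_Icc.2 hk) _).trans ?_
  have hterm : ∀ j ∈ (Icc 1 k).erase 1,
      |-((x - 1) / (j : ℝ) ^ 2) * exp (-((x - 1) / j))| ≤ |x - 1| * M * ((j : ℝ) ^ 2)⁻¹ := by
    intro j hj
    rw [abs_mul, abs_neg, abs_div, abs_of_pos (exp_pos _), abs_of_nonneg (sq_nonneg (j : ℝ)),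
      div_mul_eq_mul_div, div_eq_mul_inv]
    gcongr
    exact hexp j hj
  have hsum : ∑ j ∈ (Icc 1 k).erase 1, |-((x - 1) / (j : ℝ) ^ 2) * exp (-((x - 1) / j))|
      ≤ |x - 1| * M :=
    calc _ ≤ ∑ j ∈ (Icc 1 k).erase 1, |x - 1| * M * ((j : ℝ) ^ 2)⁻¹ := sum_le_sum hterm
      _ = |x - 1| * M * ∑ j ∈ (Icc 1 k).erase 1, ((j : ℝ) ^ 2)⁻¹ := (mul_sum ..).symm
      _ ≤ |x - 1| * M := mul_le_of_le_one_right (by positivity) (sum_Icc_erase_one_inv_sq_le_one k)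
  rw [phiCfactor_one]
  gcongr
  simp [abs_sub_comm]

lemma mul_exp_neg_mul_two_add_le_exp_one {u : ℝ} (hu : 0 ≤ u) :
    u * exp (-u) * (1 + (1 + u)) ≤ exp 1 := by
  have he : 2 ≤ exp 1 := by linarith [add_one_le_exp 1]
  have hq : u * (2 + u) ≤ exp 1 * exp u := by
    nlinarith [quadratic_le_exp_of_nonneg hu, mul_nonneg (sub_nonneg.2 he) (exp_pos u).le]
  calc u * exp (-u) * (1 + (1 + u)) = u * (2 + u) * exp (-u) := by ring
    _ ≤ exp 1 * exp u * exp (-u) := mul_le_mul_of_nonneg_right hq (exp_pos _).le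
    _ = exp 1 := by rw [mul_assoc, ← exp_add, add_neg_cancel, exp_zero, mul_one]

lemma mul_exp_mul_one_add_le_exp_one {s : ℝ} (hs0 : 0 ≤ s) (hs1 : s ≤ 1) :
    s * exp s * (1 + (1 - s) * exp (s / 2)) ≤ exp 1 := by
  have hA : exp s * (2 - s) ≤ exp 1 :=
    calc exp s * (2 - s) ≤ exp s * exp (1 - s) :=
          mul_le_mul_of_nonneg_left (by linarith [add_one_le_exp (1 - s)]) (exp_pos _).le
      _ = exp 1 := by rw [← exp_add, add_sub_cancel]
  have hB : exp (s / 2) * (2 - s) ≤ 2 :=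
    calc exp (s / 2) * (2 - s) ≤ exp (s / 2) * (2 * exp (-(s / 2))) :=
          mul_le_mul_of_nonneg_left (by linarith [add_one_le_exp (-(s / 2))]) (exp_pos _).le
      _ = 2 := by rw [mul_left_comm, ← exp_add, add_neg_cancel, exp_zero, mul_one]
  have h1s : 0 ≤ 1 - s := sub_nonneg.2 hs1
  -- after multiplying by `(2 - s)²` the claim reduces to `0 ≤ 4 (1 - s)² e`
  refine le_of_mul_le_mul_left ?_ (pow_pos (by linarith : (0 : ℝ) < 2 - s) 2)
  calc (2 - s) ^ 2 * (s * exp s * (1 + (1 - s) * exp (s / 2)))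
        = s * (exp s * (2 - s)) * ((2 - s) + (1 - s) * (exp (s / 2) * (2 - s))) := by ring
    _ ≤ s * exp 1 * ((2 - s) + (1 - s) * 2) := by
        gcongr
        exact add_nonneg (by linarith) (mul_nonneg h1s (mul_nonneg (exp_pos _).le (by linarith)))
    _ ≤ (2 - s) ^ 2 * exp 1 := by nlinarith [mul_nonneg (exp_pos 1).le (sq_nonneg (1 - s))]

lemma abs_deriv_phiCpartial_le_exp_one {k : ℕ} (hk : 1 ≤ k) {x : ℝ} (hx : 0 ≤ x) :
    |deriv (phiCpartial k) x| ≤ exp 1 := by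
  rcases le_total 1 x with h | h
  · refine (abs_deriv_phiCpartial_le hk hx zero_le_one fun j _ ↦ ?_).trans ?_
    · exact exp_le_one_iff.2 (neg_nonpos.2 (div_nonneg (by linarith) j.cast_nonneg))
    · rw [abs_of_nonneg (sub_nonneg.2 h)]
      calc _ = (x - 1) * exp (-(x - 1)) * (1 + (1 + (x - 1))) := by ring
        _ ≤ exp 1 := mul_exp_neg_mul_two_add_le_exp_one (sub_nonneg.2 h)
  · refine (abs_deriv_phiCpartial_le hk hx (exp_pos ((1 - x) / 2)).le fun j hj ↦ ?_).trans ?_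
    · have hj : 2 ≤ j := by
        simp only [mem_erase, mem_Icc] at hj
        omega
      rw [exp_le_exp, ← neg_div, neg_sub]
      exact div_le_div_of_nonneg_left (sub_nonneg.2 h) zero_lt_two (by exact_mod_cast hj)
    · rw [abs_of_nonpos (sub_nonpos.2 h), neg_sub]
      calc _ = (1 - x) * exp (1 - x) * (1 + (1 - (1 - x)) * exp ((1 - x) / 2)) := by ring
        _ ≤ exp 1 := mul_exp_mul_one_add_le_exp_one (sub_nonneg.2 h) (by linarith)

/-- For every `k ≥ 1` and every `x ≥ 0`, `|φ_k'(x)| ≤ e`; in particular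
`sup_{x ∈ ℝ₊} |φ_k'(x)| = O(1)` as `k → ∞`. -/
theorem deriv_phiCpartial_bounded :
    (∀ k : ℕ, 1 ≤ k → ∀ x : ℝ, 0 ≤ x → |deriv (phiCpartial k) x| ≤ Real.exp 1) ∧
    ∃ C : ℝ, ∀ k : ℕ, 1 ≤ k → ∀ x : ℝ, 0 ≤ x → |deriv (phiCpartial k) x| ≤ C :=
  ⟨fun _ hk _ hx ↦ abs_deriv_phiCpartial_le_exp_one hk hx,
    exp 1, fun _ hk _ hx ↦ abs_deriv_phiCpartial_le_exp_one hk hx⟩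
end

section
/- Define Φ_C(x) := ∏_{ℓ=1}^∞ (1 + (x−1)/ℓ) e^{−(x−1)/ℓ} and φ_k(x) := ∏_{ℓ=1}^k (1 + (x−1)/ℓ) e^{−(x−1)/ℓ} for x ≥ 0. Then there exists a constant C > 0 such that for all k ≥ 1, sup_{x ∈ ℝ₊} |φ_k(x) − Φ_C(x)| ≤ C/√k; i.e. sup_{ℝ₊} |φ_k − Φ_C| = O(1/√k) as k → ∞. -/
/-- The infinite product `Φ_C(x) = ∏_{ℓ=1}^∞ (1 + (x-1)/ℓ) e^{-(x-1)/ℓ}`. -/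
noncomputable def PhiC (x : ℝ) : ℝ :=
  ∏' ℓ : ℕ, (1 + (x - 1) / ((ℓ : ℝ) + 1)) * Real.exp (-((x - 1) / ((ℓ : ℝ) + 1)))

/-! Write `t = x - 1` and `E(u) = (1 + u) e^{-u}`. Then `Φ_C(x) = φ_k(x) · T_k` with tail
`T_k = ∏_{ℓ > k} E(t / ℓ)`. All factors lie in `[0, 1]` and `1 - E(u) ≤ u²`, so the Weierstrass
product inequality gives `1 - 2t²/(k+1) ≤ T_k ≤ 1`, whence
`|φ_k - Φ_C| = φ_k (1 - T_k) ≤ min (φ_k, 2t²/(k+1))`. Moreover `φ_k ≤ E(t)` and `t² E(t) ≤ 6`.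
If `t² ≤ √k` the quadratic bound gives `2/√k`; otherwise `φ_k ≤ 6/t² < 6/√k`. -/

open Finset Real

-- Weierstrass's primary factor `E₁(z) = (1 - z) eᶻ` at `z = -u`.
noncomputable def weierstrassFactor (u : ℝ) : ℝ := (1 + u) * exp (-u)

section weierstrassFactor

variable {u : ℝ}

lemma weierstrassFactor_nonneg (hu : -1 ≤ u) : 0 ≤ weierstrassFactor u :=
  mul_nonneg (by linarith) (exp_pos _).le

lemma weierstrassFactor_le_one (u : ℝ) : weierstrassFactor u ≤ 1 :=
  calc (1 + u) * exp (-u) ≤ exp u * exp (-u) := by gcongr; linarith [add_one_le_exp u]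
    _ = 1 := by rw [← exp_add, add_neg_cancel, exp_zero]

lemma one_sub_weierstrassFactor_le_sq (hu : -1 ≤ u) : 1 - weierstrassFactor u ≤ u ^ 2 := by
  have h : 1 - u ≤ exp (-u) := by linarith [add_one_le_exp (-u)]
  have := mul_le_mul_of_nonneg_left h (by linarith : 0 ≤ 1 + u)
  unfold weierstrassFactor
  nlinarith

-- For `u ≥ 0`, `(1 + u) u² ≤ 6 (1 + u + u²/2 + u³/6) ≤ 6 eᵘ`; for `u ≤ 0` both factors are at most `1`.
lemma sq_mul_weierstrassFactor_le_six (hu : -1 ≤ u) : u ^ 2 * weierstrassFactor u ≤ 6 := by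
  rcases le_or_gt u 0 with hneg | hpos
  · have : u ^ 2 ≤ 1 := by nlinarith
    nlinarith [weierstrassFactor_nonneg hu, weierstrassFactor_le_one u]
  · have hexp := sum_le_exp_of_nonneg hpos.le 4
    simp only [sum_range_succ, sum_range_zero, Nat.factorial] at hexp
    norm_num at hexp
    rw [weierstrassFactor, exp_neg, ← mul_assoc, ← div_eq_mul_inv, div_le_iff₀ (exp_pos u)]
    nlinarith

end weierstrassFactor

section ProductsInUnitInterval

variable {ι : Type*} {f g : ι → ℝ}

lemma Finset.one_sub_sum_le_prod (s : Finset ι) (hf0 : ∀ i ∈ s, 0 ≤ f i) (hf1 : ∀ i ∈ s, f i ≤ 1) :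
    1 - ∑ i ∈ s, (1 - f i) ≤ ∏ i ∈ s, f i := by
  classical
  induction s using Finset.induction_on with
  | empty => simp
  | insert a s ha ih =>
    rw [prod_insert ha, sum_insert ha]
    have ha0 := hf0 a (mem_insert_self a s)
    have ha1 := hf1 a (mem_insert_self a s)
    have hs0 : ∀ i ∈ s, 0 ≤ f i := fun i hi => hf0 i (mem_insert_of_mem hi)
    have hs1 : ∀ i ∈ s, f i ≤ 1 := fun i hi => hf1 i (mem_insert_of_mem hi)
    have hP0 : 0 ≤ ∏ i ∈ s, f i := prod_nonneg hs0
    have hS0 : 0 ≤ ∑ i ∈ s, (1 - f i) := sum_nonneg fun i hi => by linarith [hs1 i hi]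
    nlinarith [ih hs0 hs1]

lemma multipliable_of_summable_one_sub (hf1 : ∀ i, f i ≤ 1) (hfg : ∀ i, 1 - f i ≤ g i)
    (hg : Summable g) : Multipliable f := by
  have hsub : Summable fun i => 1 - f i :=
    hg.of_nonneg_of_le (fun i => by linarith [hf1 i]) hfg
  simpa using Real.multipliable_one_add_of_summable hsub.neg

lemma one_sub_tsum_le_tprod (hf0 : ∀ i, 0 ≤ f i) (hf1 : ∀ i, f i ≤ 1)
    (hfg : ∀ i, 1 - f i ≤ g i) (hg : Summable g) : 1 - ∑' i, g i ≤ ∏' i, f i := by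
  refine le_hasProd_of_le_prod (multipliable_of_summable_one_sub hf1 hfg hg).hasProd fun s => ?_
  calc 1 - ∑' i, g i ≤ 1 - ∑ i ∈ s, (1 - f i) := by
        gcongr
        exact (sum_le_sum fun i _ => hfg i).trans
          (hg.sum_le_tsum s fun i _ => (sub_nonneg.2 (hf1 i)).trans (hfg i))
    _ ≤ ∏ i ∈ s, f i := s.one_sub_sum_le_prod (fun i _ => hf0 i) (fun i _ => hf1 i)

lemma tprod_le_one_of_nonneg_of_le_one (hf0 : ∀ i, 0 ≤ f i) (hf1 : ∀ i, f i ≤ 1) : ∏' i, f i ≤ 1 :=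
  tprod_le_of_prod_le' le_rfl fun _ => prod_le_one (fun i _ => hf0 i) (fun i _ => hf1 i)

end ProductsInUnitInterval

lemma sum_range_inv_sq_nat_add_le (k n : ℕ) :
    ∑ j ∈ range n, (((j + k : ℕ) : ℝ) + 1)⁻¹ ^ 2 ≤ 2 / (k + 1) :=
  calc ∑ j ∈ range n, (((j + k : ℕ) : ℝ) + 1)⁻¹ ^ 2
      = ∑ i ∈ Ioo k (n + k + 1), ((i : ℝ) ^ 2)⁻¹ := by
        rw [← Ico_add_one_left_eq_Ioo, sum_Ico_eq_sum_range, show n + k + 1 - (k + 1) = n by omega]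
        refine sum_congr rfl fun j _ => ?_
        push_cast
        rw [inv_pow]
        ring
    _ ≤ 2 / (k + 1) := sum_Ioo_inv_sq_le k _

lemma neg_one_le_div_natCast_add_one {t : ℝ} (ht : -1 ≤ t) (j : ℕ) : -1 ≤ t / ((j : ℝ) + 1) := by
  rw [le_div_iff₀ (by positivity)]
  nlinarith [(j.cast_nonneg : (0 : ℝ) ≤ j)]

lemma weierstrassFactor_div_natCast_add_one_nonneg {t : ℝ} (ht : -1 ≤ t) (j : ℕ) :
    0 ≤ weierstrassFactor (t / ((j : ℝ) + 1)) :=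
  weierstrassFactor_nonneg (neg_one_le_div_natCast_add_one ht j)

section Tail

variable {t : ℝ} (k : ℕ)

lemma summable_sq_mul_inv_sq_nat_add :
    Summable fun j : ℕ => t ^ 2 * (((j + k : ℕ) : ℝ) + 1)⁻¹ ^ 2 :=
  (summable_of_sum_range_le (fun _ => by positivity) (sum_range_inv_sq_nat_add_le k)).mul_left _

lemma one_sub_weierstrassFactor_nat_add_le (ht : -1 ≤ t) (j : ℕ) :
    1 - weierstrassFactor (t / (((j + k : ℕ) : ℝ) + 1)) ≤ t ^ 2 * (((j + k : ℕ) : ℝ) + 1)⁻¹ ^ 2 := by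
  simpa only [div_eq_mul_inv, mul_pow] using
    one_sub_weierstrassFactor_le_sq (neg_one_le_div_natCast_add_one ht (j + k))

lemma multipliable_weierstrassFactor_nat_add (ht : -1 ≤ t) :
    Multipliable fun j : ℕ => weierstrassFactor (t / (((j + k : ℕ) : ℝ) + 1)) :=
  multipliable_of_summable_one_sub (fun _ => weierstrassFactor_le_one _)
    (one_sub_weierstrassFactor_nat_add_le k ht) (summable_sq_mul_inv_sq_nat_add k)

lemma tprod_weierstrassFactor_nat_add_le_one (ht : -1 ≤ t) :
    ∏' j : ℕ, weierstrassFactor (t / (((j + k : ℕ) : ℝ) + 1)) ≤ 1 :=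
  tprod_le_one_of_nonneg_of_le_one
    (fun _ => weierstrassFactor_div_natCast_add_one_nonneg ht _)
    (fun _ => weierstrassFactor_le_one _)

lemma one_sub_le_tprod_weierstrassFactor_nat_add (ht : -1 ≤ t) :
    1 - 2 * t ^ 2 / (k + 1) ≤ ∏' j : ℕ, weierstrassFactor (t / (((j + k : ℕ) : ℝ) + 1)) :=
  calc 1 - 2 * t ^ 2 / (k + 1) ≤ 1 - ∑' j : ℕ, t ^ 2 * (((j + k : ℕ) : ℝ) + 1)⁻¹ ^ 2 := by
        rw [tsum_mul_left, show 2 * t ^ 2 / (k + 1) = t ^ 2 * (2 / (k + 1)) by ring]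
        gcongr
        exact Real.tsum_le_of_sum_range_le (fun _ => by positivity) (sum_range_inv_sq_nat_add_le k)
    _ ≤ _ := one_sub_tsum_le_tprod
        (fun _ => weierstrassFactor_div_natCast_add_one_nonneg ht _)
        (fun _ => weierstrassFactor_le_one _)
        (one_sub_weierstrassFactor_nat_add_le k ht) (summable_sq_mul_inv_sq_nat_add k)

end Tail

lemma phiCpartial_eq_prod_range (k : ℕ) (x : ℝ) :
    phiCpartial k x = ∏ j ∈ range k, weierstrassFactor ((x - 1) / ((j : ℝ) + 1)) := by
  rw [phiCpartial, ← Ico_add_one_right_eq_Icc, prod_Ico_eq_prod_range, Nat.add_sub_cancel]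
  refine prod_congr rfl fun j _ => ?_
  simp only [weierstrassFactor]
  push_cast
  ring_nf

lemma PhiC_eq_tprod (x : ℝ) : PhiC x = ∏' j : ℕ, weierstrassFactor ((x - 1) / ((j : ℝ) + 1)) := by
  simp only [PhiC, weierstrassFactor]

section PartialProducts

variable {x : ℝ} (k : ℕ)

lemma phiCpartial_nonneg (hx : 0 ≤ x) : 0 ≤ phiCpartial k x := by
  rw [phiCpartial_eq_prod_range]
  exact prod_nonneg fun j _ => weierstrassFactor_div_natCast_add_one_nonneg (by linarith) j

lemma phiCpartial_le_one (hx : 0 ≤ x) : phiCpartial k x ≤ 1 := by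
  rw [phiCpartial_eq_prod_range]
  exact prod_le_one (fun j _ => weierstrassFactor_div_natCast_add_one_nonneg (by linarith) j)
    fun _ _ => weierstrassFactor_le_one _

lemma phiCpartial_le_weierstrassFactor (hx : 0 ≤ x) (hk : 1 ≤ k) :
    phiCpartial k x ≤ weierstrassFactor (x - 1) := by
  obtain ⟨m, rfl⟩ := Nat.exists_eq_add_of_le' hk
  rw [phiCpartial_eq_prod_range, prod_range_succ']
  have h0 : 0 ≤ weierstrassFactor (x - 1) := weierstrassFactor_nonneg (by linarith)
  have h1 : ∏ j ∈ range m, weierstrassFactor ((x - 1) / (((j + 1 : ℕ) : ℝ) + 1)) ≤ 1 :=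
    prod_le_one (fun j _ => weierstrassFactor_div_natCast_add_one_nonneg (by linarith) _)
      fun _ _ => weierstrassFactor_le_one _
  simpa using mul_le_of_le_one_left h0 h1

lemma PhiC_eq_phiCpartial_mul_tprod (hx : 0 ≤ x) :
    PhiC x = phiCpartial k x * ∏' j : ℕ, weierstrassFactor ((x - 1) / (((j + k : ℕ) : ℝ) + 1)) := by
  rw [phiCpartial_eq_prod_range, PhiC_eq_tprod]
  exact (Multipliable.prod_mul_tprod_nat_mul' (k := k)
    (f := fun j : ℕ => weierstrassFactor ((x - 1) / ((j : ℝ) + 1)))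
    (multipliable_weierstrassFactor_nat_add (t := x - 1) k (by linarith))).symm

lemma abs_phiCpartial_sub_PhiC_eq (hx : 0 ≤ x) :
    |phiCpartial k x - PhiC x| = phiCpartial k x *
      (1 - ∏' j : ℕ, weierstrassFactor ((x - 1) / (((j + k : ℕ) : ℝ) + 1))) := by
  rw [PhiC_eq_phiCpartial_mul_tprod k hx, ← mul_one_sub, abs_of_nonneg]
  exact mul_nonneg (phiCpartial_nonneg k hx)
    (sub_nonneg.2 (tprod_weierstrassFactor_nat_add_le_one k (by linarith)))

lemma abs_phiCpartial_sub_PhiC_le_phiCpartial (hx : 0 ≤ x) :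
    |phiCpartial k x - PhiC x| ≤ phiCpartial k x := by
  rw [abs_phiCpartial_sub_PhiC_eq k hx]
  exact mul_le_of_le_one_right (phiCpartial_nonneg k hx) (sub_le_self _ (tprod_nonneg fun _ =>
    weierstrassFactor_div_natCast_add_one_nonneg (by linarith) _))

lemma abs_phiCpartial_sub_PhiC_le_sq (hx : 0 ≤ x) :
    |phiCpartial k x - PhiC x| ≤ 2 * (x - 1) ^ 2 / (k + 1) := by
  have hT1 := tprod_weierstrassFactor_nat_add_le_one k (t := x - 1) (by linarith)
  have hT := one_sub_le_tprod_weierstrassFactor_nat_add k (t := x - 1) (by linarith)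
  rw [abs_phiCpartial_sub_PhiC_eq k hx]
  exact (mul_le_of_le_one_left (sub_nonneg.2 hT1) (phiCpartial_le_one k hx)).trans (by linarith)

end PartialProducts

/-- There is a constant `C > 0` such that for all `k ≥ 1`,
`sup_{x ∈ ℝ₊} |φ_k(x) - Φ_C(x)| ≤ C/√k`, i.e. `sup_{ℝ₊} |φ_k - Φ_C| = O(1/√k)`. -/
theorem phiCpartial_tendsto_PhiC_rate :
    ∃ C : ℝ, 0 < C ∧ ∀ k : ℕ, 1 ≤ k → ∀ x : ℝ, 0 ≤ x →
      |phiCpartial k x - PhiC x| ≤ C / Real.sqrt k := by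
  refine ⟨6, by norm_num, fun k hk x hx => ?_⟩
  have hk1 : (1 : ℝ) ≤ k := by exact_mod_cast hk
  have hsqrt1 : 1 ≤ √(k : ℝ) := one_le_sqrt.2 hk1
  rcases le_or_gt ((x - 1) ^ 2) √(k : ℝ) with hsmall | hlarge
  · calc |phiCpartial k x - PhiC x| ≤ 2 * (x - 1) ^ 2 / (k + 1) :=
          abs_phiCpartial_sub_PhiC_le_sq k hx
      _ ≤ 2 * √(k : ℝ) / k := by gcongr; linarith
      _ = 2 / √(k : ℝ) := by rw [mul_div_assoc, sqrt_div_self', mul_one_div]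
      _ ≤ 6 / √(k : ℝ) := by gcongr; norm_num
  · calc |phiCpartial k x - PhiC x| ≤ phiCpartial k x :=
          abs_phiCpartial_sub_PhiC_le_phiCpartial k hx
      _ ≤ weierstrassFactor (x - 1) := phiCpartial_le_weierstrassFactor k hx hk
      _ ≤ 6 / (x - 1) ^ 2 := by
          rw [le_div_iff₀ (by linarith), mul_comm]
          exact sq_mul_weierstrassFactor_le_six (by linarith)
      _ ≤ 6 / √(k : ℝ) := by gcongr
end

section
/- For k ≥ 1 and x ∈ [0,1], the tail product ψ_k(x) := ∏_{ℓ ≥ k+1} (1 − (1−x)/ℓ) e^{(1−x)/ℓ} satisfies −log ψ_k(x) = Σ_{ℓ ≥ k+1} (1/ℓ²) ∫_0^{1−x} u/(1 − u/ℓ) du ≤ C₀/k, where C₀ := ∫_0^1 u/(1 − u/2) du; consequently 1 − ψ_k(x) ≤ C₀/k for all x ∈ [0,1] and all k ≥ 1. -/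
/-!
With `t = 1 - x ∈ [0, 1]` and `m = k + 1 + ℓ ≥ 2`, the fundamental theorem of calculus gives
`log ((1 - t/m) e^{t/m}) = -(1/m²) ∫₀ᵗ u/(1 - u/m) du`, so `ψ_k(x) = exp (-S)` where `S` is the
series of these nonnegative terms. Each integral is at most `C₀`, since the integrand grows as
`m` decreases to `2` and the interval grows to `[0, 1]`; together with `∑_{ℓ > k} 1/ℓ² ≤ 1/k`
this gives `S ≤ C₀/k`, and `1 - e^{-S} ≤ S`.
-/

/-- The tail product `ψ_k(x) = ∏_{ℓ ≥ k+1} (1 - (1-x)/ℓ) e^{(1-x)/ℓ}`. -/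
noncomputable def psiCtail (k : ℕ) (x : ℝ) : ℝ :=
  ∏' ℓ : ℕ, (1 - (1 - x) / ((k : ℝ) + 1 + ℓ)) * Real.exp ((1 - x) / ((k : ℝ) + 1 + ℓ))

open MeasureTheory Real Finset

lemma sum_range_one_div_add_one_add_sq_le {k : ℕ} (hk : k ≠ 0) (n : ℕ) :
    ∑ ℓ ∈ range n, 1 / ((k : ℝ) + 1 + ℓ) ^ 2 ≤ 1 / (k : ℝ) := by
  have h := sum_Ioc_inv_sq_le_sub (α := ℝ) hk (Nat.le_add_right k n)
  rw [← Ico_add_one_add_one_eq_Ioc, sum_Ico_eq_sum_range, add_right_comm,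
    Nat.add_sub_cancel_left] at h
  push_cast at h
  simp only [one_div]
  linarith [inv_nonneg.mpr (by positivity : (0:ℝ) ≤ k + n)]

section

variable {m t : ℝ}

lemma one_sub_div_ne_zero {u : ℝ} (hm : m ≠ 0) (hu : u ≠ m) : 1 - u / m ≠ 0 := by
  rw [one_sub_div hm]
  exact div_ne_zero (sub_ne_zero.mpr hu.symm) hm

lemma hasDerivAt_neg_log_one_sub_div_add_div {u : ℝ} (hm : m ≠ 0) (hu : u ≠ m) :
    HasDerivAt (fun u => -(log (1 - u / m) + u / m)) (1 / m ^ 2 * (u / (1 - u / m))) u := by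
  have hdiv : HasDerivAt (fun u => u / m) (1 / m) u := (hasDerivAt_id' u).div_const m
  have h : HasDerivAt (fun u => -(log (1 - u / m) + u / m))
      (-(-(1 / m) / (1 - u / m) + 1 / m)) u :=
    ((hdiv.const_sub 1).log (one_sub_div_ne_zero hm hu)).add hdiv |>.neg
  convert h using 1
  have : m - u ≠ 0 := sub_ne_zero.mpr hu.symm
  field_simp
  ring

lemma continuousOn_div_one_sub_div (hm : m ∉ Set.uIcc 0 t) :
    ContinuousOn (fun u => u / (1 - u / m)) (Set.uIcc 0 t) := by
  have hm0 : m ≠ 0 := fun h => hm (h ▸ Set.left_mem_uIcc)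
  exact continuousOn_id.div (continuousOn_const.sub (continuousOn_id.div_const m))
    fun u hu => one_sub_div_ne_zero hm0 (ne_of_mem_of_not_mem hu hm)

lemma integral_div_one_sub_div (hm : m ∉ Set.uIcc 0 t) :
    1 / m ^ 2 * ∫ u in (0 : ℝ)..t, u / (1 - u / m) = -(log (1 - t / m) + t / m) := by
  have hm0 : m ≠ 0 := fun h => hm (h ▸ Set.left_mem_uIcc)
  rw [← intervalIntegral.integral_const_mul, intervalIntegral.integral_eq_sub_of_hasDerivAt
    (fun u hu => hasDerivAt_neg_log_one_sub_div_add_div hm0 (ne_of_mem_of_not_mem hu hm))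
    (((continuousOn_div_one_sub_div hm).const_smul (1 / m ^ 2)).intervalIntegrable)]
  simp

lemma integral_div_one_sub_div_nonneg (ht : 0 ≤ t) (htm : t < m) :
    0 ≤ ∫ u in (0 : ℝ)..t, u / (1 - u / m) := by
  refine intervalIntegral.integral_nonneg ht fun u hu => div_nonneg hu.1 ?_
  rw [sub_nonneg, div_le_one (by linarith)]
  linarith [hu.2]

lemma integral_div_one_sub_div_le {s a : ℝ} (ht : 0 ≤ t) (hts : t ≤ s) (hsa : s < a)
    (ham : a ≤ m) :
    ∫ u in (0 : ℝ)..t, u / (1 - u / m) ≤ ∫ u in (0 : ℝ)..s, u / (1 - u / a) := by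
  have ha : 0 < a := by linarith
  have hmt : m ∉ Set.uIcc 0 t := Set.notMem_uIcc_of_gt (by linarith) (by linarith)
  have hat : a ∉ Set.uIcc 0 t := Set.notMem_uIcc_of_gt ha (by linarith)
  calc ∫ u in (0 : ℝ)..t, u / (1 - u / m)
      ≤ ∫ u in (0 : ℝ)..t, u / (1 - u / a) := by
        refine intervalIntegral.integral_mono_on ht
          (continuousOn_div_one_sub_div hmt).intervalIntegrable
          (continuousOn_div_one_sub_div hat).intervalIntegrable
          fun u hu => div_le_div_of_nonneg_left hu.1 ?_ ?_
        · rw [sub_pos, div_lt_one ha]; linarith [hu.2]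
        · gcongr 1 - ?_
          exact div_le_div_of_nonneg_left hu.1 ha ham
    _ ≤ ∫ u in (0 : ℝ)..s, u / (1 - u / a) := by
        refine intervalIntegral.integral_mono_interval le_rfl ht hts ?_
          ((continuousOn_div_one_sub_div (Set.notMem_uIcc_of_gt ha hsa)).intervalIntegrable)
        filter_upwards [ae_restrict_mem measurableSet_Ioc] with u hu
        refine div_nonneg hu.1.le ?_
        rw [sub_nonneg, div_le_one ha]; linarith [hu.2]

lemma one_sub_div_mul_exp_div (hm : 0 < m) (htm : t < m) :
    (1 - t / m) * exp (t / m) = exp (-(1 / m ^ 2 * ∫ u in (0 : ℝ)..t, u / (1 - u / m))) := by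
  have hpos : 0 < 1 - t / m := by rw [sub_pos, div_lt_one hm]; exact htm
  rw [integral_div_one_sub_div (Set.notMem_uIcc_of_gt hm htm), neg_neg, exp_add, exp_log hpos]

end

/-- For `k ≥ 1` and `x ∈ [0,1]`, with `C₀ := ∫_0^1 u/(1 - u/2) du`:
`-log ψ_k(x) = ∑_{ℓ ≥ k+1} (1/ℓ²) ∫_0^{1-x} u/(1 - u/ℓ) du ≤ C₀/k`, and consequently
`1 - ψ_k(x) ≤ C₀/k`. -/
theorem neg_log_psiCtail (k : ℕ) (hk : 1 ≤ k) (x : ℝ) (hx : x ∈ Set.Icc (0 : ℝ) 1) :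
    (-Real.log (psiCtail k x)
        = ∑' ℓ : ℕ, (1 / ((k : ℝ) + 1 + ℓ) ^ 2) *
            ∫ u in (0 : ℝ)..(1 - x), u / (1 - u / ((k : ℝ) + 1 + ℓ))) ∧
    (-Real.log (psiCtail k x) ≤ (∫ u in (0 : ℝ)..1, u / (1 - u / 2)) / k) ∧
    (1 - psiCtail k x ≤ (∫ u in (0 : ℝ)..1, u / (1 - u / 2)) / k) := by
  set C₀ := ∫ u in (0 : ℝ)..1, u / (1 - u / 2)
  set g : ℕ → ℝ := fun ℓ => 1 / ((k : ℝ) + 1 + ℓ) ^ 2 *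
    ∫ u in (0 : ℝ)..(1 - x), u / (1 - u / ((k : ℝ) + 1 + ℓ))
  obtain ⟨hx0, hx1⟩ := hx
  have hm (ℓ : ℕ) : 2 ≤ (k : ℝ) + 1 + ℓ := by
    have : (1 : ℝ) ≤ k := by exact_mod_cast hk
    linarith [ℓ.cast_nonneg (α := ℝ)]
  have hg0 (ℓ : ℕ) : 0 ≤ g ℓ := mul_nonneg (by positivity)
    (integral_div_one_sub_div_nonneg (by linarith) (by linarith [hm ℓ]))
  have hgC (ℓ : ℕ) : g ℓ ≤ C₀ * (1 / ((k : ℝ) + 1 + ℓ) ^ 2) := by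
    rw [mul_comm C₀]
    exact mul_le_mul_of_nonneg_left
      (integral_div_one_sub_div_le (by linarith) (by linarith) one_lt_two (hm ℓ)) (by positivity)
  have hpartial (n : ℕ) : ∑ ℓ ∈ range n, g ℓ ≤ C₀ / k := calc
    ∑ ℓ ∈ range n, g ℓ ≤ C₀ * ∑ ℓ ∈ range n, 1 / ((k : ℝ) + 1 + ℓ) ^ 2 := by
      rw [mul_sum]; exact sum_le_sum fun ℓ _ => hgC ℓ
    _ ≤ C₀ * (1 / k) := mul_le_mul_of_nonneg_left (sum_range_one_div_add_one_add_sq_le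
      (by omega) n) (integral_div_one_sub_div_nonneg zero_le_one one_lt_two)
    _ = C₀ / k := mul_one_div _ _
  have hψ : psiCtail k x = exp (-∑' ℓ, g ℓ) := by
    rw [← tsum_neg, ← (summable_of_sum_range_le hg0 hpartial).neg.hasSum.rexp.tprod_eq]
    exact tprod_congr fun ℓ => one_sub_div_mul_exp_div (by linarith [hm ℓ]) (by linarith [hm ℓ])
  have hlog : -log (psiCtail k x) = ∑' ℓ, g ℓ := by rw [hψ, log_exp, neg_neg]
  have hbound : ∑' ℓ, g ℓ ≤ C₀ / k := tsum_le_of_sum_range_le hg0 hpartial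
  refine ⟨hlog, hlog ▸ hbound, ?_⟩
  rw [hψ]
  linarith [add_one_le_exp (-∑' ℓ, g ℓ)]
end

section
/- Let (Z_ℓ)_{ℓ ≥ 1} be i.i.d. random variables with P(Z ≥ x) = (1 + x) e^{−x} for all x ≥ 0. Then for every k ≥ 1, E[sup_{ℓ ≥ k+1} 1/(ℓ Z_ℓ)] ≤ 2/√(2k) = √(2/k); in particular E[sup_{ℓ ≥ k+1} 1/(ℓ Z_ℓ)] = O(k^{−1/2}) as k → ∞. -/
/-!
Fix a level `a > 0`. Since `sup_ℓ x_ℓ ≤ a + ∑_ℓ (x_ℓ - a)⁺`, it suffices to bound the truncated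
moments `E[(1/(c Z) - a)⁺]`. From `P(Z ≥ x) = (1 + x) e^{-x}` one gets the small-ball bound
`P(Z < u) ≤ u² / 2`, hence the tail bound `P(1/(c Z) > t) ≤ 1/(2 c² t²)`, and integrating the
tail above `a` gives `E[(1/(c Z) - a)⁺] ≤ 1/(2 c² a)`. Summing over `c = k + 1 + ℓ` and
comparing `1/c²` with `1/(c - 1) - 1/c` yields `a + 1/(2 a k)`, which equals `2/√(2k)` for
`a = 1/√(2k)`.
-/

open MeasureTheory ProbabilityTheory Set Filter Real
open scoped ENNReal Topology

lemma one_le_sq_div_two_add_one_add_mul_exp_neg {u : ℝ} (hu : 0 ≤ u) :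
    1 ≤ u ^ 2 / 2 + (1 + u) * exp (-u) := by
  have hderiv : ∀ x : ℝ,
      HasDerivAt (fun u : ℝ => u ^ 2 / 2 + (1 + u) * exp (-u)) (x * (1 - exp (-x))) x := by
    intro x
    have hexp : HasDerivAt (fun u : ℝ => exp (-u)) (-exp (-x)) x := by
      simpa using (hasDerivAt_neg x).exp
    exact (((hasDerivAt_pow 2 x).div_const 2).add
      (((hasDerivAt_id' x).const_add 1).mul hexp)).congr_deriv (by push_cast; ring)
  have hmono := monotone_of_hasDerivAt_nonneg hderiv fun x => by
    rcases le_total 0 x with hx | hx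
    · exact mul_nonneg hx (sub_nonneg.2 (exp_le_one_iff.2 (neg_nonpos.2 hx)))
    · exact mul_nonneg_of_nonpos_of_nonpos hx (sub_nonpos.2 (one_le_exp_iff.2 (neg_nonneg.2 hx)))
  simpa using hmono hu

lemma lintegral_Ioi_ofReal_div_add_sq {a C : ℝ} (ha : 0 < a) (hC : 0 ≤ C) :
    ∫⁻ t in Ioi (0 : ℝ), ENNReal.ofReal (C / (a + t) ^ 2) = ENNReal.ofReal (C / a) := by
  have hderiv : ∀ t ∈ Ici (0 : ℝ), HasDerivAt (fun t => -C / (a + t)) (C / (a + t) ^ 2) t := by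
    intro t ht
    have hat : a + t ≠ 0 := by
      have : (0 : ℝ) ≤ t := ht
      positivity
    exact ((hasDerivAt_const t (-C)).div ((hasDerivAt_id' t).const_add a) hat).congr_deriv
      (by ring)
  have hnonneg : ∀ t ∈ Ioi (0 : ℝ), 0 ≤ C / (a + t) ^ 2 := fun t _ => by positivity
  have hlim : Tendsto (fun t => -C / (a + t)) atTop (𝓝 0) :=
    (tendsto_atTop_add_const_left _ a tendsto_id).const_div_atTop (-C)
  rw [← ofReal_integral_eq_lintegral_ofReal
      (integrableOn_Ioi_deriv_of_nonneg' hderiv hnonneg hlim)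
      ((ae_restrict_iff' measurableSet_Ioi).2 (ae_of_all _ hnonneg)),
    integral_Ioi_of_hasDerivAt_of_nonneg' hderiv hnonneg hlim]
  congr 1
  ring

section Tails

variable {Ω : Type*} [MeasurableSpace Ω] {μ : Measure Ω} {W : Ω → ℝ}

lemma measure_lt_le_sq_div_two [IsProbabilityMeasure μ] (hW : Measurable W)
    (hsurv : ∀ x : ℝ, 0 ≤ x → μ {ω | x ≤ W ω} = ENNReal.ofReal ((1 + x) * exp (-x)))
    {u : ℝ} (hu : 0 ≤ u) :
    μ {ω | W ω < u} ≤ ENNReal.ofReal (u ^ 2 / 2) := by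
  have hcompl : {ω | W ω < u} = {ω | u ≤ W ω}ᶜ := by
    ext ω
    simp
  rw [hcompl, prob_compl_eq_one_sub (measurableSet_le measurable_const hW), hsurv u hu,
    tsub_le_iff_right, ← ENNReal.ofReal_add (by positivity) (by positivity), ← ENNReal.ofReal_one]
  exact ENNReal.ofReal_le_ofReal (one_le_sq_div_two_add_one_add_mul_exp_neg hu)

lemma measure_lt_one_div_mul_le {B c t : ℝ} (hc : 0 < c) (ht : 0 < t)
    (hsmall : ∀ u : ℝ, 0 ≤ u → μ {ω | W ω < u} ≤ ENNReal.ofReal (B * u ^ 2)) :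
    μ {ω | t < 1 / (c * W ω)} ≤ ENNReal.ofReal (B / c ^ 2 / t ^ 2) := by
  have hsub : {ω | t < 1 / (c * W ω)} ⊆ {ω | W ω < 1 / (c * t)} := by
    intro ω hω
    have hcW : 0 < c * W ω := one_div_pos.1 (ht.trans hω)
    have hW : c * W ω < 1 / t := (lt_one_div ht hcW).1 hω
    have hWt : c * W ω * t < 1 := (lt_div_iff₀ ht).1 hW
    change W ω < 1 / (c * t)
    rw [lt_div_iff₀ (mul_pos hc ht)]
    linarith
  calc μ {ω | t < 1 / (c * W ω)} ≤ μ {ω | W ω < 1 / (c * t)} := measure_mono hsub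
    _ ≤ ENNReal.ofReal (B * (1 / (c * t)) ^ 2) := hsmall _ (by positivity)
    _ = ENNReal.ofReal (B / c ^ 2 / t ^ 2) := by
      congr 1
      field_simp

lemma lintegral_ofReal_sub_le_of_measure_lt_le {Y : Ω → ℝ} (hY : AEMeasurable Y μ) {a C : ℝ}
    (ha : 0 < a) (hC : 0 ≤ C)
    (htail : ∀ t : ℝ, 0 < t → μ {ω | t < Y ω} ≤ ENNReal.ofReal (C / t ^ 2)) :
    ∫⁻ ω, ENNReal.ofReal (Y ω - a) ∂μ ≤ ENNReal.ofReal (C / a) := by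
  have hpos :
      ∫⁻ ω, ENNReal.ofReal (Y ω - a) ∂μ = ∫⁻ ω, ENNReal.ofReal (max (Y ω - a) 0) ∂μ := by
    simp
  have hlevel : ∀ t : ℝ, 0 < t → {ω | t < max (Y ω - a) 0} = {ω | a + t < Y ω} := by
    intro t ht
    ext ω
    simp only [mem_ofPred_eq, lt_max_iff, ht.not_gt, or_false]
    constructor <;> intro h <;> linarith
  rw [hpos, lintegral_eq_lintegral_meas_lt μ (f := fun ω => max (Y ω - a) 0)
    (ae_of_all _ fun _ => le_max_right _ _) (by fun_prop), ← lintegral_Ioi_ofReal_div_add_sq ha hC]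
  refine setLIntegral_mono' measurableSet_Ioi fun t (ht : 0 < t) => ?_
  rw [hlevel t ht]
  exact htail _ (by positivity)

lemma lintegral_ofReal_one_div_mul_sub_le [IsProbabilityMeasure μ] (hW : Measurable W)
    (hsurv : ∀ x : ℝ, 0 ≤ x → μ {ω | x ≤ W ω} = ENNReal.ofReal ((1 + x) * exp (-x)))
    {a c : ℝ} (ha : 0 < a) (hc : 0 < c) :
    ∫⁻ ω, ENNReal.ofReal (1 / (c * W ω) - a) ∂μ ≤ ENNReal.ofReal (1 / (2 * a) / c ^ 2) := by
  have hsmall (u : ℝ) (hu : 0 ≤ u) : μ {ω | W ω < u} ≤ ENNReal.ofReal (1 / 2 * u ^ 2) :=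
    (measure_lt_le_sq_div_two hW hsurv hu).trans_eq (by congr 1; ring)
  refine (lintegral_ofReal_sub_le_of_measure_lt_le (by fun_prop) ha (by positivity)
    fun t ht => measure_lt_one_div_mul_le hc ht hsmall).trans_eq ?_
  congr 1
  field_simp

end Tails

lemma sum_range_div_add_one_add_sq_le {x C : ℝ} (hx : 0 < x) (hC : 0 ≤ C) (n : ℕ) :
    ∑ ℓ ∈ Finset.range n, C / (x + 1 + ℓ) ^ 2 ≤ C / x := by
  have hstep : ∀ ℓ : ℕ, C / (x + 1 + ℓ) ^ 2 ≤ C / (x + ℓ) - C / (x + ↑(ℓ + 1)) := by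
    intro ℓ
    have hxl : 0 < x + ℓ := add_pos_of_pos_of_nonneg hx ℓ.cast_nonneg
    have hxl' : 0 < x + 1 + ℓ := by linarith
    have hdiff : C / (x + ℓ) - C / (x + ↑(ℓ + 1)) = C / ((x + ℓ) * (x + 1 + ℓ)) := by
      push_cast
      field_simp
      ring
    rw [hdiff]
    exact div_le_div_of_nonneg_left hC (mul_pos hxl hxl') (by nlinarith)
  calc ∑ ℓ ∈ Finset.range n, C / (x + 1 + ℓ) ^ 2
      ≤ ∑ ℓ ∈ Finset.range n, (C / (x + ℓ) - C / (x + ↑(ℓ + 1))) :=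
        Finset.sum_le_sum fun ℓ _ => hstep ℓ
    _ = C / x - C / (x + n) := by
        simpa using Finset.sum_range_sub' (fun ℓ : ℕ => C / (x + ℓ)) n
    _ ≤ C / x := sub_le_self _ (by positivity)

lemma tsum_ofReal_div_add_one_add_sq_le {x C : ℝ} (hx : 0 < x) (hC : 0 ≤ C) :
    ∑' ℓ : ℕ, ENNReal.ofReal (C / (x + 1 + ℓ) ^ 2) ≤ ENNReal.ofReal (C / x) := by
  refine ENNReal.tsum_le_of_sum_range_le fun n => ?_
  rw [← ENNReal.ofReal_sum_of_nonneg fun ℓ _ => by positivity]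
  exact ENNReal.ofReal_le_ofReal (sum_range_div_add_one_add_sq_le hx hC n)

lemma iSup_ofReal_le_ofReal_add_tsum {ι : Type*} (x : ι → ℝ) (a : ℝ) :
    ⨆ i, ENNReal.ofReal (x i) ≤ ENNReal.ofReal a + ∑' i, ENNReal.ofReal (x i - a) :=
  iSup_le fun i =>
    calc ENNReal.ofReal (x i) = ENNReal.ofReal (a + (x i - a)) := by rw [add_sub_cancel]
      _ ≤ ENNReal.ofReal a + ENNReal.ofReal (x i - a) := ENNReal.ofReal_add_le
      _ ≤ ENNReal.ofReal a + ∑' i, ENNReal.ofReal (x i - a) := by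
        gcongr
        exact ENNReal.le_tsum i

theorem expected_sup_inv_scaled_le_general
    {Ω : Type*} [MeasureSpace Ω] [IsProbabilityMeasure (ℙ : Measure Ω)]
    (Z : ℕ → Ω → ℝ) (hmeas : ∀ ℓ, Measurable (Z ℓ))
    (hdist : ∀ ℓ : ℕ, ∀ x : ℝ, 0 ≤ x →
      ℙ {ω | x ≤ Z ℓ ω} = ENNReal.ofReal ((1 + x) * Real.exp (-x))) :
    ∀ k : ℕ, 1 ≤ k →
      ∫⁻ ω, (⨆ ℓ : ℕ, ENNReal.ofReal (1 / (((k : ℝ) + 1 + ℓ) * Z (k + 1 + ℓ) ω))) ∂ℙ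
        ≤ ENNReal.ofReal (2 / Real.sqrt (2 * k)) := by
  intro k hk
  have hk_pos : (0 : ℝ) < k := by exact_mod_cast hk
  set a := 1 / √(2 * k) with ha
  calc ∫⁻ ω, (⨆ ℓ : ℕ, ENNReal.ofReal (1 / (((k : ℝ) + 1 + ℓ) * Z (k + 1 + ℓ) ω))) ∂ℙ
      ≤ ∫⁻ ω, (ENNReal.ofReal a +
          ∑' ℓ : ℕ, ENNReal.ofReal (1 / (((k : ℝ) + 1 + ℓ) * Z (k + 1 + ℓ) ω) - a)) ∂ℙ :=
        lintegral_mono fun ω => iSup_ofReal_le_ofReal_add_tsum _ a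
    _ = ENNReal.ofReal a +
          ∑' ℓ : ℕ, ∫⁻ ω, ENNReal.ofReal (1 / (((k : ℝ) + 1 + ℓ) * Z (k + 1 + ℓ) ω) - a) ∂ℙ := by
        rw [lintegral_add_left measurable_const, lintegral_const, measure_univ, mul_one,
          lintegral_tsum fun ℓ => by fun_prop]
    _ ≤ ENNReal.ofReal a + ∑' ℓ : ℕ, ENNReal.ofReal (1 / (2 * a) / ((k : ℝ) + 1 + ℓ) ^ 2) := by
        gcongr with ℓ
        exact lintegral_ofReal_one_div_mul_sub_le (hmeas _) (hdist _) (by positivity)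
          (by positivity)
    _ ≤ ENNReal.ofReal a + ENNReal.ofReal (1 / (2 * a) / k) := by
        gcongr
        exact tsum_ofReal_div_add_one_add_sq_le hk_pos (by positivity)
    _ = ENNReal.ofReal (2 / √(2 * k)) := by
        rw [← ENNReal.ofReal_add (by positivity) (by positivity)]
        have hsqrt_sq : √(2 * k) ^ 2 = 2 * k := Real.sq_sqrt (by positivity)
        congr 1
        rw [ha]
        field_simp
        linear_combination hsqrt_sq

/-- Let `(Z_ℓ)_{ℓ ≥ 1}` be i.i.d. with survival function `P(Z ≥ x) = (1+x)e^{-x}` for `x ≥ 0`.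
Then for every `k ≥ 1`, `E[sup_{ℓ ≥ k+1} 1/(ℓ Z_ℓ)] ≤ 2/√(2k) = √(2/k)`; in particular this
expectation is `O(k^{-1/2})` as `k → ∞`. -/
theorem expected_sup_inv_scaled_le
    {Ω : Type*} [MeasureSpace Ω] [IsProbabilityMeasure (ℙ : Measure Ω)]
    (Z : ℕ → Ω → ℝ) (hmeas : ∀ ℓ, Measurable (Z ℓ))
    (hindep : iIndepFun Z ℙ)
    (hdist : ∀ ℓ : ℕ, ∀ x : ℝ, 0 ≤ x →
      ℙ {ω | x ≤ Z ℓ ω} = ENNReal.ofReal ((1 + x) * Real.exp (-x))) :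
    ∀ k : ℕ, 1 ≤ k →
      ∫⁻ ω, (⨆ ℓ : ℕ, ENNReal.ofReal (1 / (((k : ℝ) + 1 + ℓ) * Z (k + 1 + ℓ) ω))) ∂ℙ
        ≤ ENNReal.ofReal (2 / Real.sqrt (2 * k)) :=
  expected_sup_inv_scaled_le_general Z hmeas hdist
end
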